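/- Let k ≥ 2 and let χ1,…,χk be primitive characters mod 16 (so all c_i are odd, where χ_i(5) = e^{2πi c_i/4}), and suppose χ1⋯χk is induced by the primitive character mod 4; in particular 4 divides c1+⋯+ck. Set v := (c1+⋯+ck)/4. Then J_4(χ1,…,χk,2^4) = 2^{(4(k−1)+2)/2} · i^{1−v} · ∏_{i=1}^k χ_i(c_i). -/

import Mathlib

/-!
Detecting `x₁ + ⋯ + x_k = 4` with the additive characters `x ↦ e(ax/16)` of `ZMod 16` gives
`16 J = ∑ₐ e(-4a/16) ∏ᵢ g(χᵢ, e(a·/16))` with Gauss sums `g`. Every `χᵢ(9) = -1` while `9a = a`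
for even `a`, so the terms with even `a` vanish. For odd `a` the Gauss sums are `χᵢ(a)⁻¹ g(χᵢ)`,
and since `∏ χᵢ` is the odd character mod 4, each of the eight odd `a` contributes `-i ∏ g(χᵢ)`.
Finally `g(χᵢ) = 4 χᵢ(-cᵢ) e(-cᵢ/16)` is evaluated directly, after pairing `x` with `x + 8 = 9x`.
-/

open Complex

/-- The generalized Jacobi sum `J_B(χ₁,…,χ_k, q)`. -/
noncomputable def Jsum {q : ℕ} [NeZero q] {k : ℕ}
    (χ : Fin k → DirichletCharacter ℂ q) (B : ZMod q) : ℂ :=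
  ∑ x : Fin k → ZMod q, if (∑ i, x i) = B then ∏ i, χ i (x i) else 0

open Finset

lemma AddChar.map_finset_sum {ι A M : Type*} [AddCommMonoid A] [CommMonoid M]
    (ψ : AddChar A M) (s : Finset ι) (f : ι → A) :
    ψ (∑ i ∈ s, f i) = ∏ i ∈ s, ψ (f i) := by
  classical
  induction s using Finset.induction_on with
  | empty => simp
  | insert a s ha ih => rw [sum_insert ha, prod_insert ha, map_add_eq_mul, ih]

lemma MulChar.finset_prod_apply_unit {ι R R' : Type*} [CommMonoid R] [CommMonoidWithZero R']
    (s : Finset ι) (χ : ι → MulChar R R') (u : Rˣ) :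
    (∏ i ∈ s, χ i) u = ∏ i ∈ s, χ i u := by
  classical
  induction s using Finset.induction_on with
  | empty => simp
  | insert a s ha ih => rw [prod_insert ha, prod_insert ha, MulChar.mul_apply, ih]

section GaussSum

variable {R R' : Type*} [CommRing R] [Fintype R] [CommRing R']

theorem gaussSum_eq_zero_of_mulShift_eq [NoZeroDivisors R'] (χ : MulChar R R') (ψ : AddChar R R')
    (u : Rˣ) (hψ : ψ.mulShift u = ψ) (hχ : χ u ≠ 1) : gaussSum χ ψ = 0 := by
  have h : (χ u - 1) * gaussSum χ ψ = 0 := by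
    rw [sub_mul, one_mul, sub_eq_zero]
    simpa only [hψ] using gaussSum_mulShift χ ψ u
  exact (mul_eq_zero.mp h).resolve_left (sub_ne_zero.mpr hχ)

theorem prod_gaussSum_mulShift {ι : Type*} (s : Finset ι) (χ : ι → MulChar R R')
    (ψ : AddChar R R') (u : Rˣ) :
    ∏ i ∈ s, gaussSum (χ i) (ψ.mulShift u) = (∏ i ∈ s, χ i) ↑u⁻¹ * ∏ i ∈ s, gaussSum (χ i) ψ := by
  have h i : gaussSum (χ i) (ψ.mulShift u) = χ i ↑u⁻¹ * gaussSum (χ i) ψ := by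
    simpa [AddChar.mulShift_mulShift] using (gaussSum_mulShift (χ i) (ψ.mulShift u) u⁻¹).symm
  rw [MulChar.finset_prod_apply_unit, ← prod_mul_distrib]
  exact prod_congr rfl fun i _ ↦ h i

end GaussSum

theorem natCast_mul_Jsum {q : ℕ} [NeZero q] {k : ℕ} (χ : Fin k → DirichletCharacter ℂ q)
    (B : ZMod q) :
    q * Jsum χ B = ∑ a : ZMod q,
      ZMod.stdAddChar (-(a * B)) * ∏ i, gaussSum (χ i) (AddChar.mulShift ZMod.stdAddChar a) := by
  classical
  have hprod a : ∏ i, gaussSum (χ i) (AddChar.mulShift ZMod.stdAddChar a) =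
      ∑ x : Fin k → ZMod q, (∏ i, χ i (x i)) * ZMod.stdAddChar (a * ∑ i, x i) := by
    simp only [gaussSum, AddChar.mulShift_apply, Fintype.prod_sum, mul_sum,
      AddChar.map_finset_sum, prod_mul_distrib]
  have horth (x : Fin k → ZMod q) :
      ∑ a : ZMod q, ZMod.stdAddChar (-(a * B)) * ZMod.stdAddChar (a * ∑ i, x i) =
        if ∑ i, x i = B then (q : ℂ) else 0 := by
    simp_rw [← AddChar.map_add_eq_mul, ← mul_neg, ← mul_add,
      AddChar.sum_mulShift _ (ZMod.isPrimitive_stdAddChar q), ZMod.card, neg_add_eq_sub,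
      sub_eq_zero, Nat.cast_ite, Nat.cast_zero]
  calc (q : ℂ) * Jsum χ B
      = ∑ x : Fin k → ZMod q, ∑ a : ZMod q,
          (∏ i, χ i (x i)) * (ZMod.stdAddChar (-(a * B)) * ZMod.stdAddChar (a * ∑ i, x i)) := by
        rw [Jsum, mul_sum]
        refine sum_congr rfl fun x _ ↦ ?_
        rw [← mul_sum, horth]
        split_ifs <;> ring
    _ = _ := by
        rw [sum_comm]
        refine sum_congr rfl fun a _ ↦ ?_
        rw [hprod, mul_sum]
        exact sum_congr rfl fun x _ ↦ by ring

lemma DirichletCharacter.odd_of_isPrimitive_of_level_four {ψ : DirichletCharacter ℂ 4}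
    (hψ : ψ.IsPrimitive) : ψ.Odd := by
  refine ψ.even_or_odd.resolve_left fun heven ↦ ?_
  have hone : ψ = 1 := by
    refine MulChar.ext fun u ↦ ?_
    have hu : ∀ u : (ZMod 4)ˣ, (u : ZMod 4) = 1 ∨ (u : ZMod 4) = -1 := by decide
    rcases hu u with h | h <;> rw [h]
    · rw [map_one, map_one]
    · rw [MulChar.one_apply isUnit_one.neg]
      exact heven
  rw [DirichletCharacter.IsPrimitive, hone, DirichletCharacter.conductor_one] at hψ
  norm_num at hψ

lemma DirichletCharacter.Odd.changeLevel {R : Type*} [CommRing R] {n m : ℕ}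
    {ψ : DirichletCharacter R n} (hψ : ψ.Odd) (h : n ∣ m) : (changeLevel h ψ).Odd := by
  have h1 := changeLevel_eq_cast_of_dvd ψ h (-1)
  rwa [Units.val_neg, Units.val_one, ZMod.cast_neg h, ZMod.cast_one h, show ψ (-1) = -1 from hψ]
    at h1

section TwoPowFour

local notation "𝕖" => (ZMod.stdAddChar : AddChar (ZMod (2 ^ 4)) ℂ)
local notation "ζ" => 𝕖 1

lemma stdAddChar_four : 𝕖 (4 : ZMod (2 ^ 4)) = I := by
  rw [← Int.cast_ofNat, ZMod.stdAddChar_coe]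
  convert exp_pi_div_two_mul_I using 2
  push_cast
  ring

lemma stdAddChar_add_eight (x : ZMod (2 ^ 4)) : 𝕖 (x + 8) = -𝕖 x := by
  rw [AddChar.map_add_eq_mul, show (8 : ZMod (2 ^ 4)) = 4 + 4 by decide,
    AddChar.map_add_eq_mul, stdAddChar_four, I_mul_I, mul_neg_one]

lemma stdAddChar_ofNat (n : ℕ) [n.AtLeastTwo] :
    𝕖 (OfNat.ofNat n : ZMod (2 ^ 4)) = ζ ^ (OfNat.ofNat n : ℕ) := by
  rw [← AddChar.map_nsmul_eq_pow, nsmul_one, Nat.cast_ofNat]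

lemma sum_zmod_two_pow_four (f : ZMod (2 ^ 4) → ℂ) : ∑ x, f x =
    f 0 + f 1 + f 2 + f 3 + f 4 + f 5 + f 6 + f 7 + f 8 + f 9 + f 10 + f 11 + f 12 + f 13 + f 14
      + f 15 := by
  rw [show (univ : Finset (ZMod (2 ^ 4))) = {0, 1, 2, 3, 4, 5, 6, 7, 8, 9, 10, 11, 12, 13, 14, 15}
    by decide]
  repeat rw [sum_insert (by decide)]
  rw [sum_singleton]
  ring

lemma apply_nine_of_apply_five (χ : DirichletCharacter ℂ (2 ^ 4)) {c : ℕ}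
    (hc : Odd c) (h5 : χ 5 = I ^ c) : χ 9 = -1 := by
  rw [show (9 : ZMod (2 ^ 4)) = 5 ^ 2 by decide, map_pow, h5, ← pow_mul, mul_comm, pow_mul,
    I_sq, hc.neg_one_pow]

-- For odd `x` we have `x + 8 = 9 * x`, and both `χ` and `𝕖` change sign under `x ↦ x + 8`.
theorem gaussSum_stdAddChar_of_apply_nine (χ : DirichletCharacter ℂ (2 ^ 4)) (h9 : χ 9 = -1) :
    gaussSum χ 𝕖 = 2 * (ζ + χ 3 * 𝕖 3 + χ 5 * 𝕖 5 + χ 7 * 𝕖 7) := by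
  have hpair (r : ZMod (2 ^ 4)) (hr : r + 8 = 9 * r) : χ (r + 8) * 𝕖 (r + 8) = χ r * 𝕖 r := by
    rw [stdAddChar_add_eight, hr, map_mul, h9]
    ring
  rw [gaussSum, sum_zmod_two_pow_four]
  simp (disch := decide) only [χ.map_nonunit]
  rw [show (9 : ZMod (2 ^ 4)) = 1 + 8 by decide, show (11 : ZMod (2 ^ 4)) = 3 + 8 by decide,
    show (13 : ZMod (2 ^ 4)) = 5 + 8 by decide, show (15 : ZMod (2 ^ 4)) = 7 + 8 by decide,
    hpair 1 (by decide), hpair 3 (by decide), hpair 5 (by decide), hpair 7 (by decide), map_one]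
  ring

lemma stdAddChar_one_pow_eight : ζ ^ 8 = -1 := by
  rw [← stdAddChar_ofNat, ← zero_add 8, stdAddChar_add_eight, AddChar.map_zero_eq_one]

theorem gaussSum_stdAddChar_of_apply_five (χ : DirichletCharacter ℂ (2 ^ 4)) {c : ℕ}
    (hc : c = 1 ∨ c = 3) (h5 : χ 5 = I ^ c) : gaussSum χ 𝕖 = 4 * χ (-c) * 𝕖 (-c) := by
  have hodd : Odd c := by rcases hc with rfl | rfl <;> decide
  have h3 : χ 3 = χ (-1) * χ 5 ^ 3 := by
    rw [← map_pow, ← map_mul, show (-1 * 5 ^ 3 : ZMod (2 ^ 4)) = 3 by decide]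
  have h7 : χ 7 = χ (-1) * χ 5 ^ 2 := by
    rw [← map_pow, ← map_mul, show (-1 * 5 ^ 2 : ZMod (2 ^ 4)) = 7 by decide]
  have hI : I = ζ ^ 4 := by rw [← stdAddChar_ofNat, stdAddChar_four]
  have hζ8 := stdAddChar_one_pow_eight
  rw [gaussSum_stdAddChar_of_apply_nine χ (apply_nine_of_apply_five χ hodd h5), h3, h7,
    stdAddChar_ofNat 3, stdAddChar_ofNat 5, stdAddChar_ofNat 7]
  rcases hc with rfl | rfl
  · rw [Nat.cast_one, show (-1 : ZMod (2 ^ 4)) = 15 by decide, stdAddChar_ofNat 15, h5, pow_one,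
      hI]
    linear_combination (2 * ζ) * hζ8
  · rw [Nat.cast_ofNat, show (-3 : ZMod (2 ^ 4)) = 5 ^ 3 by decide, map_pow,
      show (5 ^ 3 : ZMod (2 ^ 4)) = 13 by decide, stdAddChar_ofNat 13, h5, I_pow_three, hI]
    linear_combination (4 * ζ ^ 17 - 4 * ζ ^ 9 + 2 * ζ) * hζ8

lemma stdAddChar_neg_mul_four_mul_apply_inv {ψ : DirichletCharacter ℂ 4} (hψ : ψ.Odd)
    (u : (ZMod (2 ^ 4))ˣ) :
    𝕖 (-((u : ZMod (2 ^ 4)) * 4)) * ψ (ZMod.cast ((u⁻¹ : (ZMod (2 ^ 4))ˣ) : ZMod (2 ^ 4))) =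
      -I := by
  have hcases : ∀ u : (ZMod (2 ^ 4))ˣ,
      (-((u : ZMod (2 ^ 4)) * 4) = 4 + 8 ∧
        (ZMod.cast ((u⁻¹ : (ZMod (2 ^ 4))ˣ) : ZMod (2 ^ 4)) : ZMod 4) = 1) ∨
      (-((u : ZMod (2 ^ 4)) * 4) = 4 ∧
        (ZMod.cast ((u⁻¹ : (ZMod (2 ^ 4))ˣ) : ZMod (2 ^ 4)) : ZMod 4) = -1) := by
    decide
  rcases hcases u with ⟨he, hψu⟩ | ⟨he, hψu⟩ <;> rw [he, hψu]
  · rw [stdAddChar_add_eight, stdAddChar_four, map_one, mul_one]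
  · rw [show ψ (-1) = -1 from hψ, stdAddChar_four, mul_neg_one]

theorem Jsum_four_eq {k : ℕ} (hk : 0 < k) (χ : Fin k → DirichletCharacter ℂ (2 ^ 4))
    (h9 : ∀ i, χ i 9 = -1) {ψ : DirichletCharacter ℂ 4} (hψ : ψ.Odd)
    (hind : ∏ i, χ i = DirichletCharacter.changeLevel (by norm_num : 4 ∣ 2 ^ 4) ψ) :
    Jsum χ 4 = -(I / 2) * ∏ i, gaussSum (χ i) 𝕖 := by
  set G := ∏ i, gaussSum (χ i) 𝕖
  have hnonunit (a : ZMod (2 ^ 4)) (ha : ¬IsUnit a) :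
      ∏ i, gaussSum (χ i) (AddChar.mulShift 𝕖 a) = 0 := by
    have ha9 : ∀ a : ZMod (2 ^ 4), ¬IsUnit a → a * 9 = a := by decide
    refine prod_eq_zero (mem_univ ⟨0, hk⟩)
      (gaussSum_eq_zero_of_mulShift_eq _ _ ⟨9, 9, by decide, by decide⟩ ?_ ?_)
    · rw [AddChar.mulShift_mulShift, Units.val_mk, ha9 a ha]
    · rw [Units.val_mk, h9]
      norm_num
  have hunit (u : (ZMod (2 ^ 4))ˣ) :
      𝕖 (-((u : ZMod (2 ^ 4)) * 4)) * ∏ i, gaussSum (χ i) (AddChar.mulShift 𝕖 u) = -I * G := by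
    rw [prod_gaussSum_mulShift, hind, DirichletCharacter.changeLevel_eq_cast_of_dvd, ← mul_assoc,
      stdAddChar_neg_mul_four_mul_apply_inv hψ]
  have hsum : ((2 ^ 4 : ℕ) : ℂ) * Jsum χ 4 = 8 * (-I * G) := by
    rw [natCast_mul_Jsum, ← Fintype.sum_of_injective Units.val Units.val_injective _ _
      (fun a ha ↦ by rw [hnonunit a fun ⟨u, hu⟩ ↦ ha ⟨u, hu⟩, mul_zero])
      (fun u ↦ (hunit u).symm), sum_const, card_univ, ZMod.card_units_eq_totient,
      Nat.totient_prime_pow Nat.prime_two four_pos]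
    norm_num
  linear_combination hsum / 16

theorem prod_gaussSum_stdAddChar {k : ℕ} (χ : Fin k → DirichletCharacter ℂ (2 ^ 4))
    (c : Fin k → ℕ) (hc : ∀ i, c i = 1 ∨ c i = 3) (h5 : ∀ i, χ i 5 = I ^ c i)
    (hodd : (∏ i, χ i).Odd) {v : ℕ} (hv : ∑ i, c i = 4 * v) :
    ∏ i, gaussSum (χ i) 𝕖 = -4 ^ k * I ^ (-(v : ℤ)) * ∏ i, χ i (c i) := by
  have hχneg i : χ i (-(c i)) = χ i (-1) * χ i (c i) := by rw [neg_eq_neg_one_mul, map_mul]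
  have hneg : ∏ i, χ i (-1) = -1 := by
    rw [← Units.val_one, ← Units.val_neg, ← MulChar.finset_prod_apply_unit]
    exact hodd
  have he : ∏ i, 𝕖 (-(c i)) = I ^ (-(v : ℤ)) := by
    rw [← AddChar.map_finset_sum, ← stdAddChar_four, ← AddChar.map_zsmul_eq_zpow, sum_neg_distrib,
      ← Nat.cast_sum, hv, zsmul_eq_mul, Int.cast_neg, Int.cast_natCast, Nat.cast_mul,
      Nat.cast_ofNat, mul_comm, neg_mul]
  simp_rw [gaussSum_stdAddChar_of_apply_five _ (hc _) (h5 _), hχneg]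
  rw [prod_mul_distrib, prod_mul_distrib, prod_mul_distrib, prod_const, card_univ,
    Fintype.card_fin, hneg, he]
  ring

end TwoPowFour

lemma exp_two_pi_I_mul_div_four (n : ℕ) : exp (2 * Real.pi * I * n / 4) = I ^ n := by
  rw [show 2 * Real.pi * I * n / 4 = n * (Real.pi / 2 * I) by ring, exp_nat_mul,
    exp_pi_div_two_mul_I]

lemma ofReal_sqrt_two_pow (j : ℕ) : (Real.sqrt 2 : ℂ) ^ (4 * j + 2) = 4 ^ (j + 1) / 2 := by
  rw [show 4 * j + 2 = 2 * (2 * j + 1) by ring, pow_mul, ← ofReal_pow,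
    Real.sq_sqrt zero_le_two, pow_succ, pow_mul]
  norm_num
  ring

theorem stmt8 {k : ℕ} (hk : 2 ≤ k)
    (χ : Fin k → DirichletCharacter ℂ (2 ^ 4))
    -- the c_i with χ_i(5) = e(c_i/4), 1 ≤ c_i ≤ 4
    (c : Fin k → ℕ) (hcrange : ∀ i, 1 ≤ c i ∧ c i ≤ 4)
    (hχ5 : ∀ i, χ i ((5 : ℕ) : ZMod (2 ^ 4)) =
      Complex.exp (2 * Real.pi * Complex.I * (c i) / 4))
    -- all χ_i primitive mod 16, i.e. all c_i odd
    (hcodd : ∀ i, Odd (c i))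
    -- χ₁⋯χ_k induced by the primitive character ψ mod 4;
    -- in particular 4 divides c₁+⋯+c_k
    (ψ : DirichletCharacter ℂ 4) (hψ : ψ.IsPrimitive)
    (hind : ∏ i, χ i = DirichletCharacter.changeLevel (by norm_num : (4:ℕ) ∣ 2 ^ 4) ψ)
    (v : ℕ) (hv : (∑ i, c i) = 4 * v) :
    Jsum χ ((4 : ℕ) : ZMod (2 ^ 4)) =
      (Real.sqrt 2 : ℂ) ^ (4 * (k - 1) + 2) *
        Complex.I ^ ((1 : ℤ) - (v : ℤ)) *
        ∏ i, χ i ((c i : ZMod (2 ^ 4))) := by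
  have hc i : c i = 1 ∨ c i = 3 := by
    obtain ⟨m, hm⟩ := hcodd i
    have := hcrange i
    omega
  have h5 i : χ i 5 = I ^ c i := by
    rw [← exp_two_pi_I_mul_div_four, ← hχ5, Nat.cast_ofNat]
  have hψodd := DirichletCharacter.odd_of_isPrimitive_of_level_four hψ
  have h9 i := apply_nine_of_apply_five (χ i) (hcodd i) (h5 i)
  obtain ⟨j, rfl⟩ : ∃ j, k = j + 1 := ⟨k - 1, by omega⟩
  rw [Nat.cast_ofNat, Jsum_four_eq (by omega) χ h9 hψodd hind,
    prod_gaussSum_stdAddChar χ c hc h5 (hind ▸ hψodd.changeLevel _) hv, Nat.add_sub_cancel,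
    ofReal_sqrt_two_pow, zpow_sub₀ I_ne_zero, zpow_one, zpow_neg, zpow_natCast]
  field_simp
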